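/- Let N ≥ 1 be a natural number, ν ∈ (0,1), μ = 1 − ν, and α > 0. Define j(x,t) = e^{−αt} ∫₀¹ (1−u)^{N−x} (1 + (μ/ν)u)^{x} u^{α−1} du for integers 0 ≤ x ≤ N and t ∈ ℝ. Then for every integer 0 ≤ x ≤ N−1 and every t ∈ ℝ, (∂/∂t) j(x,t) + μ·x·(j(x−1,t) − j(x,t)) + ν·(N−x)·(j(x+1,t) − j(x,t)) = 0. -/

import Mathlib

/-!
Write `h x u = (1 - u) ^ (N - x) * (1 + (μ / ν) * u) ^ x`. Since
`ν * ((1 + (μ / ν) * u) - (1 - u)) = u`, the Ehrenfest generator acting on the state variable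
of `h` is the Euler operator in `u`: `(Q h) x u = -u * ∂ᵤ h x u`. Integrating against
`u ^ (α - 1)` and by parts (the boundary term vanishes because `h x 1 = 0` for `x < N` and
`u ^ α = 0` at `0`) makes `I x = ∫₀¹ h x u * u ^ (α - 1) du` an eigenfunction, `Q I = α * I`,
and the factor `e^{-αt}` cancels the eigenvalue.
-/

open MeasureTheory Set

/-- At `x = 0` the truncated `x - 1` is harmless: the death rate `μ * x` vanishes. -/
noncomputable def ehrenfestGenerator (N : ℕ) (ν μ : ℝ) (f : ℕ → ℝ) (x : ℕ) : ℝ :=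
  μ * x * (f (x - 1) - f x) + ν * ((N : ℝ) - x) * (f (x + 1) - f x)

theorem integrableOn_Ioo_mul_rpow_sub_one {g : ℝ → ℝ} {α : ℝ} (hα : 0 < α)
    (hg : ContinuousOn g (Icc 0 1)) :
    IntegrableOn (fun u => g u * u ^ (α - 1)) (Ioo 0 1) := by
  have h : IntervalIntegrable (fun u => g u * u ^ (α - 1)) volume 0 1 :=
    (intervalIntegral.intervalIntegrable_rpow' (by linarith)).continuousOn_mul
      (by rwa [uIcc_of_le zero_le_one])
  exact ((intervalIntegrable_iff_integrableOn_Ioc_of_le zero_le_one).1 h).mono_set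
    Ioo_subset_Ioc_self

theorem setIntegral_Ioo_deriv_mul_rpow {g : ℝ → ℝ} {α : ℝ} (hα : 0 < α)
    (hg : ContDiff ℝ 1 g) (hg1 : g 1 = 0) :
    ∫ u in Ioo 0 1, deriv g u * u ^ α = -(α * ∫ u in Ioo 0 1, g u * u ^ (α - 1)) := by
  have hparts := intervalIntegral.integral_mul_deriv_eq_deriv_mul_of_hasDerivAt
    (a := 0) (b := 1) (u := g) (v := fun u => u ^ α) (u' := deriv g)
    (v' := fun u => α * u ^ (α - 1))
    hg.continuous.continuousOn (Real.continuous_rpow_const hα.le).continuousOn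
    (fun u _ => (hg.differentiable one_ne_zero u).hasDerivAt)
    (fun u hu => Real.hasDerivAt_rpow_const (Or.inl (by simp at hu; linarith [hu.1])))
    ((hg.continuous_deriv le_rfl).intervalIntegrable 0 1)
    ((intervalIntegral.intervalIntegrable_rpow' (by linarith)).const_mul α)
  simp only [intervalIntegral.integral_of_le zero_le_one, integral_Ioc_eq_integral_Ioo,
    hg1, Real.zero_rpow hα.ne', mul_zero, zero_mul, sub_zero] at hparts
  have hcomm : ∫ u in Ioo 0 1, α * (g u * u ^ (α - 1))
      = ∫ u in Ioo 0 1, g u * (α * u ^ (α - 1)) := by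
    congr 1 with u
    ring
  rw [← integral_const_mul, hcomm, hparts, zero_sub, neg_neg]

namespace ehrenfestGenerator

variable {N : ℕ} {ν μ : ℝ}

theorem mul_const (f : ℕ → ℝ) (a : ℝ) (x : ℕ) :
    ehrenfestGenerator N ν μ (fun y => f y * a) x = ehrenfestGenerator N ν μ f x * a := by
  unfold ehrenfestGenerator; ring

theorem apply_integral {X : Type*} [MeasurableSpace X] {ρ : Measure X} {φ : ℕ → X → ℝ}
    (hφ : ∀ y, Integrable (φ y) ρ) (x : ℕ) :
    ehrenfestGenerator N ν μ (fun y => ∫ u, φ y u ∂ρ) x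
      = ∫ u, ehrenfestGenerator N ν μ (fun y => φ y u) x ∂ρ := by
  unfold ehrenfestGenerator
  dsimp only
  rw [integral_add, integral_const_mul, integral_const_mul, integral_sub (hφ _) (hφ _),
    integral_sub (hφ _) (hφ _)] <;> fun_prop

theorem apply_pow_mul_pow {x : ℕ} (hx : x < N) (hν : ν ≠ 0) (hμν : μ + ν = 1) (u : ℝ) :
    ehrenfestGenerator N ν μ (fun y => (1 - u) ^ (N - y) * (1 + μ / ν * u) ^ y) x
      = -(u * deriv (fun v => (1 - v) ^ (N - x) * (1 + μ / ν * v) ^ x) u) := by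
  obtain ⟨m, rfl⟩ : ∃ m, N = x + m + 1 := ⟨N - x - 1, by omega⟩
  have hc : ν * (μ / ν) = μ := by field_simp
  generalize μ / ν = c at *
  have hderiv : HasDerivAt (fun v => (1 - v) ^ (m + 1) * (1 + c * v) ^ x)
      (-((m + 1) * (1 - u) ^ m * (1 + c * u) ^ x)
        + (1 - u) ^ (m + 1) * (x * (1 + c * u) ^ (x - 1) * c)) u := by
    have h1 := ((hasDerivAt_id u).const_sub 1).fun_pow (m + 1)
    have h2 := (((hasDerivAt_id u).const_mul c).const_add 1).fun_pow x
    refine (h1.fun_mul h2).congr_deriv ?_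
    simp only [id, Nat.add_sub_cancel]
    push_cast
    ring
  unfold ehrenfestGenerator
  dsimp only
  rw [show x + m + 1 - x = m + 1 by omega, show x + m + 1 - (x + 1) = m by omega, hderiv.deriv]
  push_cast
  rcases x with _ | y
  · simp only [CharP.cast_eq_zero, zero_mul, zero_add, pow_zero, mul_one]
    linear_combination (m + 1) * u * (1 - u) ^ m * (hc + hμν)
  · rw [show y + 1 + m + 1 - (y + 1 - 1) = m + 2 by omega, Nat.add_sub_cancel]
    push_cast
    linear_combination
      ((y + 1) * u * (1 - u) ^ (m + 1) * (1 + c * u) ^ y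
        + (m + 1) * u * (1 - u) ^ m * (1 + c * u) ^ (y + 1)) * hc
      + (-(y + 1) * u * (1 - u) ^ (m + 1) * (1 + c * u) ^ y * c
        + (m + 1) * u * (1 - u) ^ m * (1 + c * u) ^ (y + 1)) * hμν

theorem apply_setIntegral_rpow {x : ℕ} (hx : x < N) (hν : ν ≠ 0) (hμν : μ + ν = 1) {α : ℝ}
    (hα : 0 < α) :
    ehrenfestGenerator N ν μ
        (fun y => ∫ u in Ioo 0 1, (1 - u) ^ (N - y) * (1 + μ / ν * u) ^ y * u ^ (α - 1)) x
      = α * ∫ u in Ioo 0 1, (1 - u) ^ (N - x) * (1 + μ / ν * u) ^ x * u ^ (α - 1) := by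
  rw [apply_integral fun y => integrableOn_Ioo_mul_rpow_sub_one hα (by fun_prop)]
  calc _ = ∫ u in Ioo 0 1,
          -(deriv (fun v => (1 - v) ^ (N - x) * (1 + μ / ν * v) ^ x) u * u ^ α) := by
        refine setIntegral_congr_fun measurableSet_Ioo fun u hu => ?_
        rw [mul_const, apply_pow_mul_pow hx hν hμν, Real.rpow_sub_one hu.1.ne']
        generalize deriv (fun v => (1 - v) ^ (N - x) * (1 + μ / ν * v) ^ x) u = d
        field_simp [hu.1.ne']
    _ = _ := by
        rw [integral_neg, setIntegral_Ioo_deriv_mul_rpow hα (by fun_prop) (by simp; omega),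
          neg_neg]

end ehrenfestGenerator

/-- The function `j(x,t) = e^{-αt} ∫₀¹ (1-u)^{N-x} (1 + (μ/ν)u)^{x} u^{α-1} du` is
space-time harmonic for the Ehrenfest generator away from the state `N`. -/
theorem ehrenfest_Jalpha_harmonic
    (N : ℕ) (hN : 1 ≤ N) (ν μ : ℝ) (hν : ν ∈ Set.Ioo (0:ℝ) 1) (hμ : μ = 1 - ν)
    (α : ℝ) (hα : 0 < α) (j : ℕ → ℝ → ℝ)
    (hj : ∀ (x : ℕ) (t : ℝ),
      j x t = Real.exp (-α * t) *
        ∫ u in Set.Ioo (0:ℝ) 1,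
          (1 - u) ^ (N - x) * (1 + (μ / ν) * u) ^ x * u ^ (α - 1)) :
    ∀ (x : ℕ), x ≤ N - 1 → ∀ t : ℝ,
      deriv (j x) t
        + μ * x * (j (x - 1) t - j x t)
        + ν * ((N : ℝ) - x) * (j (x + 1) t - j x t) = 0 := by
  intro x hx t
  have hgen := ehrenfestGenerator.apply_setIntegral_rpow (N := N) (ν := ν) (μ := μ) (x := x)
    (by omega) hν.1.ne' (by linarith) hα
  have hderiv : HasDerivAt (j x) (-α * j x t) t := by
    rw [funext (hj x)]
    exact (((hasDerivAt_id t).const_mul (-α)).exp.mul_const _).congr_deriv (by simp; ring)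
  unfold ehrenfestGenerator at hgen
  rw [hderiv.deriv, hj, hj, hj]
  linear_combination Real.exp (-α * t) * hgen
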